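/- Let F : ℝ ⇒ ℝ be a cyclically quasi-monotone multi-map with full domain. For every x, y ∈ ℝ, x ≺_F y if and only if there exists p ∈ F(x) with p·(y − x) > 0. -/

import Mathlib

/-- Cyclic quasi-monotonicity of a multi-map `F : ℝ ⇒ ℝ`. -/
def CyclicallyQuasiMonotone1 (F : ℝ → Set ℝ) : Prop :=
  ∀ (N : ℕ) (x p : ℕ → ℝ),
    0 < N → x N = x 0 → (∀ i < N, p i ∈ F (x i)) →
    ∃ i < N, p i * (x (i + 1) - x i) ≤ 0

/-- `x 0, …, x N` is an `F`-ascending path. -/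
def AscendingPath1 (F : ℝ → Set ℝ) (x : ℕ → ℝ) (N : ℕ) : Prop :=
  ∀ i < N, ∃ p ∈ F (x i), 0 < p * (x (i + 1) - x i)

/-- `a ≺_F b`: there is an `F`-ascending path from `a` to `b`. -/
def PrecF1 (F : ℝ → Set ℝ) (a b : ℝ) : Prop :=
  ∃ (N : ℕ) (x : ℕ → ℝ), 0 < N ∧ x 0 = a ∧ x N = b ∧ AscendingPath1 F x N

/-- `a ⪯_F b`: `{w : w ≺_F a} ⊆ {w : w ≺_F b}`. -/
def PreceqF1 (F : ℝ → Set ℝ) (a b : ℝ) : Prop :=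
  ∀ w, PrecF1 F w a → PrecF1 F w b

/-- The convex set `C^F(x) = {w : w ⪯_F x}`. -/
def CF1 (F : ℝ → Set ℝ) (x : ℝ) : Set ℝ :=
  {w | PreceqF1 F w x}

/-!
On the line, a two-step ascent `a → c → b` along directions `p ∈ F a`, `q ∈ F c` cannot
turn back: the two-cycle `a, c, a` forces `q * (a - c) ≤ 0`, so `c` lies between `a` and `b`
and `b - a` has the sign of `c - a`. Inducting along an ascending path, the first direction
`p ∈ F x` therefore still ascends towards the endpoint `y`. Conversely a single step is a path.
-/

namespace CyclicallyQuasiMonotone1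

variable {F : ℝ → Set ℝ}

lemma mul_sub_nonpos_of_pos (hF : CyclicallyQuasiMonotone1 F) {a c p q : ℝ}
    (hp : p ∈ F a) (hq : q ∈ F c) (hpos : 0 < p * (c - a)) : q * (a - c) ≤ 0 := by
  obtain ⟨i, hi, hle⟩ := hF 2 (fun i => if i = 1 then c else a)
    (fun i => if i = 1 then q else p) two_pos rfl
    (fun i hi => by interval_cases i <;> simpa)
  interval_cases i
  · exact absurd hle (by simpa using hpos)
  · simpa using hle

lemma pos_mul_sub_trans (hF : CyclicallyQuasiMonotone1 F) {a b c p q : ℝ}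
    (hp : p ∈ F a) (hq : q ∈ F c) (hac : 0 < p * (c - a)) (hcb : 0 < q * (b - c)) :
    0 < p * (b - a) := by
  have hca := hF.mul_sub_nonpos_of_pos hp hq hac
  rcases lt_trichotomy q 0 with hq0 | rfl | hq0
  · have hbetween : b < c ∧ c ≤ a := ⟨by nlinarith, by nlinarith⟩
    nlinarith
  · simp at hcb
  · have hbetween : c < b ∧ a ≤ c := ⟨by nlinarith, by nlinarith⟩
    nlinarith

lemma pos_mul_sub_of_ascendingPath (hF : CyclicallyQuasiMonotone1 F) {x : ℕ → ℝ} {N : ℕ}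
    (hx : AscendingPath1 F x N) {p : ℝ} (hp : p ∈ F (x 0)) (h₁ : 0 < p * (x 1 - x 0)) :
    ∀ k, 1 ≤ k → k ≤ N → 0 < p * (x k - x 0) := by
  intro k hk
  induction k, hk using Nat.le_induction with
  | base => exact fun _ => h₁
  | succ k _ ih =>
    intro hkN
    obtain ⟨q, hq, hstep⟩ := hx k hkN
    exact hF.pos_mul_sub_trans hp hq (ih (k.le_succ.trans hkN)) hstep

end CyclicallyQuasiMonotone1

lemma precF1_of_pos_mul_sub {F : ℝ → Set ℝ} {x y p : ℝ} (hp : p ∈ F x)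
    (hpos : 0 < p * (y - x)) : PrecF1 F x y :=
  ⟨1, fun i => if i = 0 then x else y, one_pos, rfl, rfl,
    fun i hi => by interval_cases i; exact ⟨p, hp, by simpa using hpos⟩⟩

theorem stmt10 (F : ℝ → Set ℝ)
    (hF : CyclicallyQuasiMonotone1 F) (x y : ℝ) :
    PrecF1 F x y ↔ ∃ p ∈ F x, 0 < p * (y - x) := by
  constructor
  · rintro ⟨N, xs, hN, rfl, rfl, hasc⟩
    obtain ⟨p, hp, h₁⟩ := hasc 0 hN
    exact ⟨p, hp, hF.pos_mul_sub_of_ascendingPath hasc hp h₁ N hN le_rfl⟩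
  · rintro ⟨p, hp, hpos⟩
    exact precF1_of_pos_mul_sub hp hpos
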